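/- Let π be a monotone, sublinear functional on L(𝒜) satisfying 𝔪(π) < ∞, where 𝔪(π) is the supremum of (Σᵢ₌₁ᴺ aᵢ π(fᵢ) − π(Σᵢ₌₁ᴺ aᵢ fᵢ)) / π(Σᵢ₌₁ᴺ aᵢ fᵢ) over all convex combinations (aᵢ ≥ 0, Σ aᵢ = 1) of nonnegative elements f₁, …, f_N of L(𝒜) with π(Σᵢ aᵢ fᵢ) > 0. Then there exists a strictly π-positive, π-dominated finitely additive nonnegative set function m on 𝒜. -/

import Mathlib

/-- An algebra of subsets of `Ω`: contains `∅` and `univ`, closed under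
complements and finite unions. -/
def IsSetAlgebra {Ω : Type*} (𝒜 : Set (Set Ω)) : Prop :=
  ∅ ∈ 𝒜 ∧ Set.univ ∈ 𝒜 ∧ (∀ A ∈ 𝒜, Aᶜ ∈ 𝒜) ∧ ∀ A ∈ 𝒜, ∀ B ∈ 𝒜, A ∪ B ∈ 𝒜

/-- `sFun β = (1/|β|) ∑_{B ∈ β} 1_B` for a finite sequence (list) of sets `β`. -/
noncomputable def sFun {Ω : Type*} (β : List (Set Ω)) : Ω → ℝ := fun ω =>
  (β.map fun B => B.indicator (fun _ => (1 : ℝ)) ω).sum / β.length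

/-- `L(𝒜)`: the linear span of the indicators of sets in `𝒜`. -/
def LSpan {Ω : Type*} (𝒜 : Set (Set Ω)) : Submodule ℝ (Ω → ℝ) :=
  Submodule.span ℝ {f | ∃ A ∈ 𝒜, f = A.indicator fun _ => (1 : ℝ)}

/-- `π` is monotone on `L(𝒜)`. -/
def MonotoneOnL {Ω : Type*} (𝒜 : Set (Set Ω)) (π : (Ω → ℝ) → ℝ) : Prop :=
  ∀ f ∈ LSpan 𝒜, ∀ g ∈ LSpan 𝒜, f ≤ g → π f ≤ π g

/-- `π` is sublinear on `L(𝒜)`: subadditive and positively homogeneous. -/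
def SublinearOnL {Ω : Type*} (𝒜 : Set (Set Ω)) (π : (Ω → ℝ) → ℝ) : Prop :=
  (∀ f ∈ LSpan 𝒜, ∀ g ∈ LSpan 𝒜, π (f + g) ≤ π f + π g) ∧
    ∀ c : ℝ, 0 ≤ c → ∀ f ∈ LSpan 𝒜, π (c • f) = c * π f

/-- A nonnegative finitely additive set function on the algebra `𝒜`. -/
def IsFANonneg {Ω : Type*} (𝒜 : Set (Set Ω)) (m : Set Ω → ℝ) : Prop :=
  (∀ A ∈ 𝒜, 0 ≤ m A) ∧ m ∅ = 0 ∧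
    ∀ A ∈ 𝒜, ∀ B ∈ 𝒜, Disjoint A B → m (A ∪ B) = m A + m B

/-- `𝒩(π) = {A ∈ 𝒜 : π(1_A) = 0}`. -/
def NullPi {Ω : Type*} (𝒜 : Set (Set Ω)) (π : (Ω → ℝ) → ℝ) : Set (Set Ω) :=
  {A ∈ 𝒜 | π (A.indicator fun _ => (1 : ℝ)) = 0}

/-- `m` is `π`-dominated: `m(A) ≤ π(1_A)` for all `A ∈ 𝒜`. -/
def PiDominated {Ω : Type*} (𝒜 : Set (Set Ω)) (π : (Ω → ℝ) → ℝ) (m : Set Ω → ℝ) : Prop :=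
  ∀ A ∈ 𝒜, m A ≤ π (A.indicator fun _ => (1 : ℝ))

/-- `m` is strictly `π`-positive: `𝒩(m) ⊆ 𝒩(π)`. -/
def StrictlyPiPositive {Ω : Type*} (𝒜 : Set (Set Ω)) (π : (Ω → ℝ) → ℝ) (m : Set Ω → ℝ) : Prop :=
  ∀ A ∈ 𝒜, m A = 0 → π (A.indicator fun _ => (1 : ℝ)) = 0

/-- `I_π(𝓑) = inf over nonempty finite sequences β from 𝓑 of π(s(β))`. -/
noncomputable def interNumPi {Ω : Type*} (π : (Ω → ℝ) → ℝ) (𝓑 : Set (Set Ω)) : ℝ :=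
  sInf {r | ∃ β : List (Set Ω), β ≠ [] ∧ (∀ B ∈ β, B ∈ 𝓑) ∧ r = π (sFun β)}

/-!
Because `π` is monotone, `π (∑ λᵢ • 1_{Bᵢ}) = 0` forces every `λᵢ * π 1_{Bᵢ}` to vanish, so a bound
`M` on the nonlinearity index gives `∑ λᵢ * π 1_{Bᵢ} ≤ (1 + M) * π (∑ λᵢ • 1_{Bᵢ})` for all
nonnegative weights, normalised or not. This is the hypothesis of the Mazur–Orlicz theorem for the
sublinear functional `π` on `L(𝒜)` and the targets `π 1_B / (1 + M)`; it yields a linear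
functional `g ≤ π` with `π 1_B / (1 + M) ≤ g 1_B`, and `B ↦ g 1_B` is the required set function.
Mazur–Orlicz itself is Hahn–Banach applied to the infimal convolution of `p` with the cone
spanned by the pairs `(x i, w i)`.
-/

section MazurOrlicz

open Finsupp

variable {E ι : Type*} [AddCommGroup E] [Module ℝ E]

noncomputable def infConvolution (p : E → ℝ) (x : ι → E) (w : ι → ℝ) (y : E) : ℝ :=
  ⨅ c : {c : ι →₀ ℝ // 0 ≤ c}, p (y + linearCombination ℝ x c.1) - linearCombination ℝ w c.1

variable {p : E → ℝ} {x : ι → E} {w : ι → ℝ}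

lemma infConvolution_le (hadd : ∀ y z, p (y + z) ≤ p y + p z)
    (hw : ∀ c : ι →₀ ℝ, 0 ≤ c → linearCombination ℝ w c ≤ p (linearCombination ℝ x c))
    (y : E) {c : ι →₀ ℝ} (hc : 0 ≤ c) :
    infConvolution p x w y ≤ p (y + linearCombination ℝ x c) - linearCombination ℝ w c := by
  refine ciInf_le ⟨-p (-y), ?_⟩ (⟨c, hc⟩ : {c : ι →₀ ℝ // 0 ≤ c})
  rintro _ ⟨⟨c, hc⟩, rfl⟩
  have := hadd (y + linearCombination ℝ x c) (-y)
  rw [add_neg_cancel_comm] at this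
  linarith [hw c hc]

lemma le_infConvolution {y : E} {a : ℝ}
    (h : ∀ c : ι →₀ ℝ, 0 ≤ c → a ≤ p (y + linearCombination ℝ x c) - linearCombination ℝ w c) :
    a ≤ infConvolution p x w y :=
  le_ciInf fun c => h c.1 c.2

lemma infConvolution_add_le (hadd : ∀ y z, p (y + z) ≤ p y + p z)
    (hw : ∀ c : ι →₀ ℝ, 0 ≤ c → linearCombination ℝ w c ≤ p (linearCombination ℝ x c))
    (y z : E) : infConvolution p x w (y + z) ≤ infConvolution p x w y + infConvolution p x w z := by
  suffices ∀ c d : ι →₀ ℝ, 0 ≤ c → 0 ≤ d → infConvolution p x w (y + z) ≤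
      (p (y + linearCombination ℝ x c) - linearCombination ℝ w c) +
        (p (z + linearCombination ℝ x d) - linearCombination ℝ w d) by
    have hz : ∀ c : ι →₀ ℝ, 0 ≤ c → infConvolution p x w (y + z) -
        (p (y + linearCombination ℝ x c) - linearCombination ℝ w c) ≤ infConvolution p x w z :=
      fun c hc => le_infConvolution fun d hd => by linarith [this c d hc hd]
    have hy : infConvolution p x w (y + z) - infConvolution p x w z ≤ infConvolution p x w y :=
      le_infConvolution fun c hc => by linarith [hz c hc]
    linarith
  intro c d hc hd
  have hsplit : y + z + linearCombination ℝ x (c + d) =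
      (y + linearCombination ℝ x c) + (z + linearCombination ℝ x d) := by
    rw [map_add]; abel
  have := infConvolution_le hadd hw (y + z) (add_nonneg hc hd)
  rw [hsplit, map_add] at this
  linarith [hadd (y + linearCombination ℝ x c) (z + linearCombination ℝ x d)]

lemma infConvolution_smul_le (hsmul : ∀ a : ℝ, 0 < a → ∀ y, p (a • y) = a * p y)
    (hadd : ∀ y z, p (y + z) ≤ p y + p z)
    (hw : ∀ c : ι →₀ ℝ, 0 ≤ c → linearCombination ℝ w c ≤ p (linearCombination ℝ x c))
    {a : ℝ} (ha : 0 < a) (y : E) : infConvolution p x w (a • y) ≤ a * infConvolution p x w y := by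
  refine (le_ciInf fun c => ?_).trans_eq (Real.mul_iInf_of_nonneg ha.le _).symm
  have hac : 0 ≤ a • c.1 := fun i => mul_nonneg ha.le (c.2 i)
  calc infConvolution p x w (a • y)
      ≤ p (a • y + linearCombination ℝ x (a • c.1)) - linearCombination ℝ w (a • c.1) :=
        infConvolution_le hadd hw _ hac
    _ = a * (p (y + linearCombination ℝ x c.1) - linearCombination ℝ w c.1) := by
        rw [map_smul, map_smul, ← smul_add, hsmul a ha, smul_eq_mul, mul_sub]

lemma infConvolution_smul (hsmul : ∀ a : ℝ, 0 < a → ∀ y, p (a • y) = a * p y)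
    (hadd : ∀ y z, p (y + z) ≤ p y + p z)
    (hw : ∀ c : ι →₀ ℝ, 0 ≤ c → linearCombination ℝ w c ≤ p (linearCombination ℝ x c))
    {a : ℝ} (ha : 0 < a) (y : E) : infConvolution p x w (a • y) = a * infConvolution p x w y := by
  refine le_antisymm (infConvolution_smul_le hsmul hadd hw ha y) ?_
  have := infConvolution_smul_le hsmul hadd hw (inv_pos.2 ha) (a • y)
  rw [inv_smul_smul₀ ha.ne'] at this
  rwa [← le_div_iff₀' ha, div_eq_inv_mul]

/-- The Mazur–Orlicz theorem. -/
theorem exists_linearMap_le_of_linearCombination_le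
    (hsmul : ∀ a : ℝ, 0 < a → ∀ y, p (a • y) = a * p y)
    (hadd : ∀ y z, p (y + z) ≤ p y + p z)
    (hw : ∀ c : ι →₀ ℝ, 0 ≤ c → linearCombination ℝ w c ≤ p (linearCombination ℝ x c)) :
    ∃ g : E →ₗ[ℝ] ℝ, (∀ y, g y ≤ p y) ∧ ∀ i, w i ≤ g (x i) := by
  have hp0 : p 0 = 0 := by
    have := hsmul 2 two_pos 0
    rw [smul_zero] at this
    linarith
  obtain ⟨g, -, hg⟩ := exists_extension_of_le_sublinear ⟨⊥, 0⟩ (infConvolution p x w)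
    (fun a ha => infConvolution_smul hsmul hadd hw ha) (infConvolution_add_le hadd hw) <| by
      rintro ⟨y, hy⟩
      obtain rfl := (Submodule.mem_bot ℝ).1 hy
      exact le_infConvolution fun c hc => by simpa using hw c hc
  refine ⟨g, fun y => (hg y).trans ?_, fun i => ?_⟩
  · simpa [hp0] using infConvolution_le hadd hw y (le_refl 0)
  · have hi : 0 ≤ single i (1 : ℝ) := Finsupp.single_nonneg.2 zero_le_one
    simpa only [map_neg, linearCombination_single, one_smul, neg_add_cancel, hp0, smul_eq_mul,
      one_mul, zero_sub, neg_le_neg_iff] using (hg (-x i)).trans (infConvolution_le hadd hw _ hi)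

end MazurOrlicz

section DominatedCharge

variable {Ω : Type*} {𝒜 : Set (Set Ω)} {π : (Ω → ℝ) → ℝ}

lemma indicator_one_mem_LSpan {A : Set Ω} (hA : A ∈ 𝒜) :
    A.indicator (fun _ => (1 : ℝ)) ∈ LSpan 𝒜 :=
  Submodule.subset_span ⟨A, hA, rfl⟩

lemma SublinearOnL.map_zero (hsub : SublinearOnL 𝒜 π) : π 0 = 0 := by
  simpa using hsub.2 0 le_rfl 0 (LSpan 𝒜).zero_mem

lemma MonotoneOnL.nonneg (hmono : MonotoneOnL 𝒜 π) (hsub : SublinearOnL 𝒜 π) {f : Ω → ℝ}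
    (hfL : f ∈ LSpan 𝒜) (hf : 0 ≤ f) : 0 ≤ π f :=
  hsub.map_zero ▸ hmono 0 (LSpan 𝒜).zero_mem f hfL hf

lemma MonotoneOnL.indicator_nonneg (hmono : MonotoneOnL 𝒜 π) (hsub : SublinearOnL 𝒜 π)
    {A : Set Ω} (hA : A ∈ 𝒜) : 0 ≤ π (A.indicator fun _ => 1) :=
  hmono.nonneg hsub (indicator_one_mem_LSpan hA) (Set.indicator_nonneg fun _ _ => zero_le_one)

def NonlinearityLE (𝒜 : Set (Set Ω)) (π : (Ω → ℝ) → ℝ) (M : ℝ) : Prop :=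
  ∀ (N : ℕ) (a : Fin N → ℝ) (f : Fin N → Ω → ℝ),
    (∀ i, 0 ≤ a i) → (∑ i, a i) = 1 → (∀ i, f i ∈ LSpan 𝒜) → (∀ i, 0 ≤ f i) →
    0 < π (∑ i, a i • f i) →
    ((∑ i, a i * π (f i)) - π (∑ i, a i • f i)) / π (∑ i, a i • f i) ≤ M

variable {M : ℝ}

lemma NonlinearityLE.mono {M' : ℝ} (hM : NonlinearityLE 𝒜 π M) (hMM' : M ≤ M') :
    NonlinearityLE 𝒜 π M' :=
  fun N a f ha hsum hfL hf hpos => (hM N a f ha hsum hfL hf hpos).trans hMM'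

lemma NonlinearityLE.div_le_of_fintype (hM : NonlinearityLE 𝒜 π M) {κ : Type*} [Fintype κ]
    (a : κ → ℝ) (f : κ → Ω → ℝ) (ha : ∀ i, 0 ≤ a i) (hsum : ∑ i, a i = 1)
    (hfL : ∀ i, f i ∈ LSpan 𝒜) (hf : ∀ i, 0 ≤ f i) (hpos : 0 < π (∑ i, a i • f i)) :
    ((∑ i, a i * π (f i)) - π (∑ i, a i • f i)) / π (∑ i, a i • f i) ≤ M := by
  let e := (Fintype.equivFin κ).symm
  have := hM _ (fun k => a (e k)) (fun k => f (e k)) (fun k => ha _) (by rwa [e.sum_comp a])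
    (fun k => hfL _) (fun k => hf _)
  simp only [e.sum_comp (fun i => a i • f i), e.sum_comp (fun i => a i * π (f i))] at this
  exact this hpos

lemma NonlinearityLE.sum_mul_le (hM : NonlinearityLE 𝒜 π M) (hmono : MonotoneOnL 𝒜 π)
    (hsub : SublinearOnL 𝒜 π) {κ : Type*} [Fintype κ] (c : κ → ℝ) (f : κ → Ω → ℝ)
    (hc : ∀ i, 0 ≤ c i) (hfL : ∀ i, f i ∈ LSpan 𝒜) (hf : ∀ i, 0 ≤ f i) :
    ∑ i, c i * π (f i) ≤ (1 + M) * π (∑ i, c i • f i) := by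
  set s := ∑ i, c i • f i
  have hsL : s ∈ LSpan 𝒜 := Submodule.sum_mem _ fun i _ => Submodule.smul_mem _ _ (hfL i)
  have hterm_nonneg : ∀ i, 0 ≤ c i • f i := fun i => smul_nonneg (hc i) (hf i)
  rcases (hmono.nonneg hsub hsL (Finset.sum_nonneg fun i _ => hterm_nonneg i)).eq_or_lt
    with hs0 | hspos
  · -- each `c i • f i` lies below `s`, so `π s = 0` forces every `c i * π (f i) ≤ 0`
    rw [← hs0, mul_zero]
    refine Finset.sum_nonpos fun i _ => ?_
    rw [← hsub.2 _ (hc i) _ (hfL i), hs0]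
    exact hmono _ (Submodule.smul_mem _ _ (hfL i)) _ hsL
      (Finset.single_le_sum (fun j _ => hterm_nonneg j) (Finset.mem_univ i))
  · set t := ∑ i, c i
    have ht : 0 < t := by
      refine (Finset.sum_nonneg fun i _ => hc i).lt_of_ne fun ht0 => hspos.ne' ?_
      have hc0 := (Finset.sum_eq_zero_iff_of_nonneg fun i _ => hc i).1 ht0.symm
      simp [s, hc0, hsub.map_zero]
    have hs : ∑ i, (c i / t) • t • f i = s :=
      Finset.sum_congr rfl fun i _ => by rw [smul_smul, div_mul_cancel₀ _ ht.ne']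
    have hweights : ∑ i, c i / t * π (t • f i) = ∑ i, c i * π (f i) :=
      Finset.sum_congr rfl fun i _ => by rw [hsub.2 t ht.le _ (hfL i)]; field_simp
    have := hM.div_le_of_fintype (fun i => c i / t) (fun i => t • f i)
      (fun i => div_nonneg (hc i) ht.le) (by rw [← Finset.sum_div, div_self ht.ne'])
      (fun i => Submodule.smul_mem _ _ (hfL i)) (fun i => smul_nonneg ht.le (hf i))
      (hs ▸ hspos)
    rw [hs, hweights, div_le_iff₀ hspos] at this
    linarith

lemma exists_linearMap_le_and_div_le (hM : NonlinearityLE 𝒜 π M) (hM0 : 0 ≤ M)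
    (hmono : MonotoneOnL 𝒜 π) (hsub : SublinearOnL 𝒜 π) :
    ∃ g : LSpan 𝒜 →ₗ[ℝ] ℝ, (∀ f, g f ≤ π f) ∧ ∀ A (hA : A ∈ 𝒜),
      π (A.indicator fun _ => 1) / (1 + M) ≤ g ⟨_, indicator_one_mem_LSpan hA⟩ := by
  have hK : 0 < 1 + M := by linarith
  obtain ⟨g, hg_le, hg_ge⟩ := exists_linearMap_le_of_linearCombination_le
    (p := fun f : LSpan 𝒜 => π f)
    (x := fun A : 𝒜 => ⟨_, indicator_one_mem_LSpan A.2⟩)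
    (w := fun A : 𝒜 => π ((A : Set Ω).indicator fun _ => 1) / (1 + M))
    (fun a ha f => hsub.2 a ha.le f f.2) (fun f g => hsub.1 f f.2 g g.2) <| by
      intro c hc
      simp only [Finsupp.linearCombination_apply, Finsupp.sum, Submodule.coe_sum,
        Submodule.coe_smul, smul_eq_mul, ← mul_div_assoc, ← Finset.sum_div, div_le_iff₀ hK]
      rw [← Finset.sum_coe_sort c.support, ← Finset.sum_coe_sort c.support, mul_comm]
      exact hM.sum_mul_le hmono hsub _ _ (fun A => hc A) (fun A => indicator_one_mem_LSpan A.1.2)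
        (fun A => Set.indicator_nonneg (fun _ _ => zero_le_one))
  exact ⟨g, hg_le, fun A hA => hg_ge ⟨A, hA⟩⟩

open Classical in
noncomputable def setFunctionOfLinearMap (g : LSpan 𝒜 →ₗ[ℝ] ℝ) (A : Set Ω) : ℝ :=
  if hA : A ∈ 𝒜 then g ⟨_, indicator_one_mem_LSpan hA⟩ else 0

lemma setFunctionOfLinearMap_of_mem (g : LSpan 𝒜 →ₗ[ℝ] ℝ) {A : Set Ω} (hA : A ∈ 𝒜) :
    setFunctionOfLinearMap g A = g ⟨_, indicator_one_mem_LSpan hA⟩ :=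
  dif_pos hA

lemma isFANonneg_setFunctionOfLinearMap (hunion : ∀ A ∈ 𝒜, ∀ B ∈ 𝒜, A ∪ B ∈ 𝒜)
    (g : LSpan 𝒜 →ₗ[ℝ] ℝ) (hg : ∀ A (hA : A ∈ 𝒜), 0 ≤ g ⟨_, indicator_one_mem_LSpan hA⟩) :
    IsFANonneg 𝒜 (setFunctionOfLinearMap g) := by
  refine ⟨fun A hA => (setFunctionOfLinearMap_of_mem g hA).symm ▸ hg A hA, ?_, ?_⟩
  · by_cases h : (∅ : Set Ω) ∈ 𝒜
    · rw [setFunctionOfLinearMap_of_mem g h, ← map_zero g]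
      exact congrArg g (Subtype.ext (Set.indicator_empty _))
    · exact dif_neg h
  · intro A hA B hB hAB
    simp only [setFunctionOfLinearMap_of_mem g (hunion A hA B hB),
      setFunctionOfLinearMap_of_mem g hA, setFunctionOfLinearMap_of_mem g hB, ← map_add]
    congr
    exact Set.indicator_union_of_disjoint hAB _

theorem exists_isFANonneg_div_le_le (hunion : ∀ A ∈ 𝒜, ∀ B ∈ 𝒜, A ∪ B ∈ 𝒜)
    (hM : NonlinearityLE 𝒜 π M) (hM0 : 0 ≤ M) (hmono : MonotoneOnL 𝒜 π)
    (hsub : SublinearOnL 𝒜 π) :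
    ∃ m : Set Ω → ℝ, IsFANonneg 𝒜 m ∧ ∀ A ∈ 𝒜,
      π (A.indicator fun _ => 1) / (1 + M) ≤ m A ∧ m A ≤ π (A.indicator fun _ => 1) := by
  obtain ⟨g, hg_le, hg_ge⟩ := exists_linearMap_le_and_div_le hM hM0 hmono hsub
  refine ⟨setFunctionOfLinearMap g, isFANonneg_setFunctionOfLinearMap hunion g fun A hA => ?_,
    fun A hA => ?_⟩
  · exact (div_nonneg (hmono.indicator_nonneg hsub hA) (by linarith)).trans (hg_ge A hA)
  · rw [setFunctionOfLinearMap_of_mem g hA]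
    exact ⟨hg_ge A hA, hg_le _⟩

end DominatedCharge

theorem exists_dominated_of_bounded_nonlinarity_general {Ω : Type*}
    (𝒜 : Set (Set Ω)) (h𝒜 : IsSetAlgebra 𝒜) (π : (Ω → ℝ) → ℝ)
    (hmono : MonotoneOnL 𝒜 π) (hsub : SublinearOnL 𝒜 π)
    (hfin : ∃ M : ℝ, ∀ (N : ℕ) (a : Fin N → ℝ) (f : Fin N → Ω → ℝ),
      (∀ i, 0 ≤ a i) → (∑ i, a i) = 1 → (∀ i, f i ∈ LSpan 𝒜) → (∀ i, 0 ≤ f i) →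
      0 < π (∑ i, a i • f i) →
      ((∑ i, a i * π (f i)) - π (∑ i, a i • f i)) / π (∑ i, a i • f i) ≤ M) :
    ∃ m : Set Ω → ℝ, IsFANonneg 𝒜 m ∧ PiDominated 𝒜 π m ∧ StrictlyPiPositive 𝒜 π m := by
  obtain ⟨M, hM⟩ := hfin
  have hK : 0 < 1 + max M 0 := by positivity
  obtain ⟨m, hm, hm_bounds⟩ := exists_isFANonneg_div_le_le h𝒜.2.2.2
    (NonlinearityLE.mono hM (le_max_left M 0)) (le_max_right M 0) hmono hsub
  refine ⟨m, hm, fun A hA => (hm_bounds A hA).2, fun A hA hmA => ?_⟩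
  have hle := (div_le_iff₀ hK).1 (hm_bounds A hA).1
  rw [hmA, zero_mul] at hle
  exact le_antisymm hle (hmono.indicator_nonneg hsub hA)

/-- If `π` is monotone and sublinear on `L(𝒜)` and the nonlinearity index
`𝔪(π) = sup (Σᵢ aᵢ π(fᵢ) - π(Σᵢ aᵢ fᵢ)) / π(Σᵢ aᵢ fᵢ)` — the supremum over all convex
combinations of nonnegative elements of `L(𝒜)` with `π(Σᵢ aᵢ fᵢ) > 0` — is finite
(i.e. the ratios are bounded above by some `M`), then there exists a strictly
`π`-positive, `π`-dominated nonnegative finitely additive set function on `𝒜`. -/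
theorem exists_dominated_of_bounded_nonlinarity {Ω : Type*} [Nonempty Ω]
    (𝒜 : Set (Set Ω)) (h𝒜 : IsSetAlgebra 𝒜) (π : (Ω → ℝ) → ℝ)
    (hmono : MonotoneOnL 𝒜 π) (hsub : SublinearOnL 𝒜 π)
    (hfin : ∃ M : ℝ, ∀ (N : ℕ) (a : Fin N → ℝ) (f : Fin N → Ω → ℝ),
      (∀ i, 0 ≤ a i) → (∑ i, a i) = 1 → (∀ i, f i ∈ LSpan 𝒜) → (∀ i, 0 ≤ f i) →
      0 < π (∑ i, a i • f i) →
      ((∑ i, a i * π (f i)) - π (∑ i, a i • f i)) / π (∑ i, a i • f i) ≤ M) :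
    ∃ m : Set Ω → ℝ, IsFANonneg 𝒜 m ∧ PiDominated 𝒜 π m ∧ StrictlyPiPositive 𝒜 π m :=
  exists_dominated_of_bounded_nonlinarity_general 𝒜 h𝒜 π hmono hsub hfin
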